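/- Let T = q1⁴(q2−3q1/5)p1²/(q1−q2) + q2⁴(q1−3q2/5)p2²/(q2−q1) and K = (q1²p1−q2²p2)(q1²p1+q2²p2)(q1²(5q1²−10q1q2+q2²)p1 + q2²(q1²−10q1q2+5q2²)p2)/(q1q2(q1−q2)). Then {T,K} = 0 identically on the open set where q1,q2 ≠ 0 and q1 ≠ q2. -/

import Mathlib

/-- Canonical Poisson bracket of two functions on phase space (q1,q2,p1,p2). -/
noncomputable def pb (f g : ℝ → ℝ → ℝ → ℝ → ℝ) (q1 q2 p1 p2 : ℝ) : ℝ :=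
  (deriv (fun x => f x q2 p1 p2) q1) * (deriv (fun x => g q1 q2 x p2) p1)
  - (deriv (fun x => f q1 q2 x p2) p1) * (deriv (fun x => g x q2 p1 p2) q1)
  + (deriv (fun x => f q1 x p1 p2) q2) * (deriv (fun x => g q1 q2 p1 x) p2)
  - (deriv (fun x => f q1 q2 p1 x) p2) * (deriv (fun x => g q1 x p1 p2) q2)

noncomputable def T (q1 q2 p1 p2 : ℝ) : ℝ :=
  q1^4 * (q2 - 3*q1/5) * p1^2 / (q1 - q2) + q2^4 * (q1 - 3*q2/5) * p2^2 / (q2 - q1)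

noncomputable def K (q1 q2 p1 p2 : ℝ) : ℝ :=
  (q1^2*p1 - q2^2*p2) * (q1^2*p1 + q2^2*p2)
  * (q1^2*(5*q1^2 - 10*q1*q2 + q2^2)*p1 + q2^2*(q1^2 - 10*q1*q2 + 5*q2^2)*p2)
  / (q1*q2*(q1 - q2))

set_option maxHeartbeats 4000000 in
set_option maxRecDepth 100000 in
theorem stmt13 (q1 q2 p1 p2 : ℝ) (h1 : q1 ≠ 0) (h2 : q2 ≠ 0) (h3 : q1 ≠ q2) :
    pb T K q1 q2 p1 p2 = 0 := by
  have hq12 : q1 - q2 ≠ 0 := sub_ne_zero.mpr h3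
  have hq21 : q2 - q1 ≠ 0 := sub_ne_zero.mpr (Ne.symm h3)
  have hden : q1 * q2 * (q1 - q2) ≠ 0 := mul_ne_zero (mul_ne_zero h1 h2) hq12
  -- dT/dq1
  have hTq1 :=
    ((((hasDerivAt_pow 4 q1).mul
        ((((hasDerivAt_id q1).const_mul (3:ℝ)).div_const (5:ℝ)).const_sub q2)).mul_const
        (p1^2)).div ((hasDerivAt_id q1).sub_const q2) hq12).add
      (((((hasDerivAt_id q1).sub_const (3*q2/5)).const_mul (q2^4)).mul_const (p2^2)).div
        ((hasDerivAt_id q1).const_sub q2) hq21)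
  -- dT/dq2
  have hTq2 :=
    (((((hasDerivAt_id q2).sub_const (3*q1/5)).const_mul (q1^4)).mul_const (p1^2)).div
        ((hasDerivAt_id q2).const_sub q1) hq12).add
      ((((hasDerivAt_pow 4 q2).mul
          ((((hasDerivAt_id q2).const_mul (3:ℝ)).div_const (5:ℝ)).const_sub q1)).mul_const
          (p2^2)).div ((hasDerivAt_id q2).sub_const q1) hq21)
  -- dT/dp1
  have hTp1 :=
    ((((hasDerivAt_pow 2 p1).const_mul (q1^4 * (q2 - 3*q1/5))).div_const (q1 - q2)).add
      (hasDerivAt_const p1 (q2^4 * (q1 - 3*q2/5) * p2^2 / (q2 - q1))))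
  -- dT/dp2
  have hTp2 :=
    ((hasDerivAt_const p2 (q1^4 * (q2 - 3*q1/5) * p1^2 / (q1 - q2))).add
      (((hasDerivAt_pow 2 p2).const_mul (q2^4 * (q1 - 3*q2/5))).div_const (q2 - q1)))
  -- dK/dq1
  have nKq1 :=
    (((((hasDerivAt_pow 2 q1).mul_const p1).sub_const (q2^2*p2)).mul
        (((hasDerivAt_pow 2 q1).mul_const p1).add_const (q2^2*p2))).mul
      ((((hasDerivAt_pow 2 q1).mul
            ((((hasDerivAt_pow 2 q1).const_mul (5:ℝ)).sub
                (((hasDerivAt_id q1).const_mul (10:ℝ)).mul_const q2)).add_const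
              (q2^2))).mul_const p1).add
        (((((hasDerivAt_pow 2 q1).sub
              (((hasDerivAt_id q1).const_mul (10:ℝ)).mul_const q2)).add_const
            (5*q2^2)).const_mul (q2^2)).mul_const p2)))
  have hKq1 :=
    nKq1.div (((hasDerivAt_id q1).mul_const q2).mul ((hasDerivAt_id q1).sub_const q2)) hden
  -- dK/dq2
  have f3a2 : HasDerivAt (fun x : ℝ => 5*q1^2 - 10*q1*x + x^2) (-(10*q1*1) + 2*q2^(2-1)) q2 := by
    have := (((hasDerivAt_id q2).const_mul (10*q1)).const_sub (5*q1^2)).add (hasDerivAt_pow 2 q2)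
    simpa [Pi.add_def] using this
  have f3b2 : HasDerivAt (fun x : ℝ => q1^2 - 10*q1*x + 5*x^2) (-(10*q1*1) + 5*(2*q2^(2-1))) q2 := by
    have := (((hasDerivAt_id q2).const_mul (10*q1)).const_sub (q1^2)).add ((hasDerivAt_pow 2 q2).const_mul (5:ℝ))
    simpa [Pi.add_def] using this
  have nKq2 :=
    ((((hasDerivAt_pow 2 q2).mul_const p2).const_sub (q1^2*p1)).mul
        (((hasDerivAt_pow 2 q2).mul_const p2).const_add (q1^2*p1))).mul
      (((f3a2.const_mul (q1^2)).mul_const p1).add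
        (((hasDerivAt_pow 2 q2).mul f3b2).mul_const p2))
  have hKq2 :=
    nKq2.div (((hasDerivAt_id q2).const_mul q1).mul ((hasDerivAt_id q2).const_sub q1)) hden
  -- dK/dp1
  have hKp1 :=
    (((((hasDerivAt_id p1).const_mul (q1^2)).sub_const (q2^2*p2)).mul
        (((hasDerivAt_id p1).const_mul (q1^2)).add_const (q2^2*p2))).mul
      (((hasDerivAt_id p1).const_mul (q1^2*(5*q1^2 - 10*q1*q2 + q2^2))).add_const
        (q2^2*(q1^2 - 10*q1*q2 + 5*q2^2)*p2))).div_const (q1*q2*(q1 - q2))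
  -- dK/dp2
  have hKp2 :=
    (((((hasDerivAt_id p2).const_mul (q2^2)).const_sub (q1^2*p1)).mul
        (((hasDerivAt_id p2).const_mul (q2^2)).const_add (q1^2*p1))).mul
      (((hasDerivAt_id p2).const_mul (q2^2*(q1^2 - 10*q1*q2 + 5*q2^2))).const_add
        (q1^2*(5*q1^2 - 10*q1*q2 + q2^2)*p1))).div_const (q1*q2*(q1 - q2))
  have e1 : deriv (fun x => T x q2 p1 p2) q1 = _ := hTq1.deriv
  have e2 : deriv (fun x => T q1 x p1 p2) q2 = _ := hTq2.deriv
  have e3 : deriv (fun x => T q1 q2 x p2) p1 = _ := hTp1.deriv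
  have e4 : deriv (fun x => T q1 q2 p1 x) p2 = _ := hTp2.deriv
  have e5 : deriv (fun x => K x q2 p1 p2) q1 = _ := hKq1.deriv
  have e6 : deriv (fun x => K q1 x p1 p2) q2 = _ := hKq2.deriv
  have e7 : deriv (fun x => K q1 q2 x p2) p1 = _ := hKp1.deriv
  have e8 : deriv (fun x => K q1 q2 p1 x) p2 = _ := hKp2.deriv
  simp only [pb]
  rw [e1, e2, e3, e4, e5, e6, e7, e8]
  simp only [Pi.add_apply, Pi.mul_apply, Pi.sub_apply, Pi.div_apply, id]
  push_cast
  field_simp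
  ring
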